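/- arXiv:2207.04193 — 2 statements merged into one kernel-verified Lean document; each statement's English description precedes it below -/
import Mathlib

section
/- Let 1 ≤ p < ∞ and let R > 0. The extended Mazur map φ : ℓ^p(ℕ,ℝ) → ℓ²(ℕ,ℝ), given coordinatewise by a ↦ sgn(a)|a|^{p/2}, restricts to a uniformly continuous map from the closed ball of radius R in ℓ^p(ℕ,ℝ) into the closed ball of radius R^{p/2} in ℓ²(ℕ,ℝ). -/
/-!
Write `φₛ(a) = sgn(a)|a|^s`. Since `|φ_{p/2}(a)|² = |a|^p`, the Mazur map satisfies
`‖φ x‖₂² = ‖x‖ₚ^p`. For uniform continuity it suffices to find, for every `η > 0`, a constant `C`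
with `|φ_{p/2}(a) - φ_{p/2}(b)|² ≤ C |a - b|^p + η (|a|^p + |b|^p)`: summing over the coordinates
gives `‖φ x - φ y‖₂² ≤ C ‖x - y‖ₚ^p + 2ηR^p` on the ball of radius `R`.
For `p ≤ 2` the map `φ_{p/2}` is `p/2`-Hölder, so `η` plays no role. For `p ≥ 2` the mean value
bound `|φₛ(a) - φₛ(b)| ≤ s |a - b| (|a| + |b|)^(s-1)` is small when `|a - b| ≤ ρ (|a| + |b|)`,
and otherwise is controlled by `(|a - b| / ρ)^s`.
-/

open scoped ENNReal

theorem rpow_sub_rpow_le_of_one_le {s a b : ℝ} (hs : 1 ≤ s) (hb : 0 ≤ b) (hba : b ≤ a) :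
    a ^ s - b ^ s ≤ s * a ^ (s - 1) * (a - b) := by
  rcases hba.eq_or_lt with rfl | hba
  · simp
  have := (convexOn_rpow hs).slope_le_of_hasDerivAt hb (hb.trans hba.le) hba
    (Real.hasDerivAt_rpow_const (Or.inr hs))
  rwa [slope_def_field, div_le_iff₀ (sub_pos.2 hba)] at this

lemma sq_rpow_div_two {x : ℝ} (hx : 0 ≤ x) (p : ℝ) : (x ^ (p / 2)) ^ 2 = x ^ p := by
  rw [← Real.rpow_mul_natCast hx]
  norm_num

lemma mul_rpow_sub_one_le {s d m ρ : ℝ} (hs : 1 ≤ s) (hd : 0 ≤ d) (hdm : d ≤ m) (hρ : 0 < ρ) :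
    d * m ^ (s - 1) ≤ ρ * m ^ s + (d / ρ) ^ s := by
  have hm : 0 ≤ m := hd.trans hdm
  have hmm : m * m ^ (s - 1) = m ^ s := by
    rw [← Real.rpow_one_add' hm (by linarith), add_sub_cancel]
  by_cases h : d ≤ ρ * m
  · calc d * m ^ (s - 1) ≤ ρ * m * m ^ (s - 1) := by gcongr
      _ = ρ * m ^ s := by rw [mul_assoc, hmm]
      _ ≤ ρ * m ^ s + (d / ρ) ^ s := le_add_of_nonneg_right (by positivity)
  · have hmd : m ≤ d / ρ := by rw [le_div_iff₀ hρ]; linarith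
    calc d * m ^ (s - 1) ≤ m * m ^ (s - 1) := by gcongr
      _ = m ^ s := hmm
      _ ≤ (d / ρ) ^ s := by gcongr
      _ ≤ ρ * m ^ s + (d / ρ) ^ s := le_add_of_nonneg_left (by positivity)

lemma Real.rpow_add_le_mul_rpow_add_rpow {a b p : ℝ} (ha : 0 ≤ a) (hb : 0 ≤ b) (hp : 1 ≤ p) :
    (a + b) ^ p ≤ 2 ^ (p - 1) * (a ^ p + b ^ p) := by
  lift a to NNReal using ha
  lift b to NNReal using hb
  exact_mod_cast NNReal.rpow_add_le_mul_rpow_add_rpow a b hp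

noncomputable def signedRpow (s a : ℝ) : ℝ := Real.sign a * |a| ^ s

lemma signedRpow_of_nonneg {s a : ℝ} (hs : s ≠ 0) (ha : 0 ≤ a) : signedRpow s a = a ^ s := by
  rcases ha.eq_or_lt with rfl | ha
  · simp [signedRpow, Real.zero_rpow hs]
  · rw [signedRpow, Real.sign_of_pos ha, abs_of_pos ha, one_mul]

lemma signedRpow_neg (s a : ℝ) : signedRpow s (-a) = -signedRpow s a := by
  simp [signedRpow, Real.sign_neg]

lemma abs_signedRpow {s : ℝ} (hs : s ≠ 0) (a : ℝ) : |signedRpow s a| = |a| ^ s := by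
  wlog ha : 0 ≤ a generalizing a
  · simpa [signedRpow_neg] using this (-a) (by linarith)
  rw [signedRpow_of_nonneg hs ha, abs_of_nonneg ha, abs_of_nonneg (by positivity)]

/-- Since `signedRpow s` is odd and increasing, a bound on its increments that only depends
on `|a - b|` and `|a| + |b|` reduces to the cases `0 ≤ b ≤ a` and `b ≤ 0 ≤ a`. -/
theorem abs_signedRpow_sub_le {s : ℝ} (hs : 0 < s) {G : ℝ → ℝ → ℝ}
    (same_sign : ∀ a b, 0 ≤ b → b ≤ a → a ^ s - b ^ s ≤ G (a - b) (a + b))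
    (opposite_sign : ∀ a b, 0 ≤ a → 0 ≤ b → a ^ s + b ^ s ≤ G (a + b) (a + b)) (a b : ℝ) :
    |signedRpow s a - signedRpow s b| ≤ G |a - b| (|a| + |b|) := by
  wlog ha : 0 ≤ a generalizing a b
  · have := this (-a) (-b) (by linarith)
    rwa [signedRpow_neg, signedRpow_neg, neg_sub_neg, neg_sub_neg, abs_neg, abs_neg,
      abs_sub_comm b, abs_sub_comm (signedRpow s b)] at this
  rcases le_total 0 b with hb | hb
  · rw [signedRpow_of_nonneg hs.ne' ha, signedRpow_of_nonneg hs.ne' hb, abs_of_nonneg ha,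
      abs_of_nonneg hb]
    rcases le_total b a with hba | hab
    · rw [abs_of_nonneg (sub_nonneg.2 hba),
        abs_of_nonneg (sub_nonneg.2 (Real.rpow_le_rpow hb hba hs.le))]
      exact same_sign a b hb hba
    · rw [abs_sub_comm a b, abs_of_nonneg (sub_nonneg.2 hab),
        abs_of_nonpos (sub_nonpos.2 (Real.rpow_le_rpow ha hab hs.le)), neg_sub, add_comm]
      exact same_sign b a ha hab
  · obtain ⟨c, hc, rfl⟩ : ∃ c, 0 ≤ c ∧ b = -c := ⟨-b, by linarith, by ring⟩
    rw [signedRpow_neg, signedRpow_of_nonneg hs.ne' ha, signedRpow_of_nonneg hs.ne' hc,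
      sub_neg_eq_add, sub_neg_eq_add, abs_neg, abs_of_nonneg ha, abs_of_nonneg hc,
      abs_of_nonneg (by positivity), abs_of_nonneg (by positivity)]
    exact opposite_sign a c ha hc

theorem abs_signedRpow_sub_le_of_le_one {s : ℝ} (hs : 0 < s) (hs1 : s ≤ 1) (a b : ℝ) :
    |signedRpow s a - signedRpow s b| ≤ 2 * |a - b| ^ s := by
  refine abs_signedRpow_sub_le hs (G := fun d _ ↦ 2 * d ^ s) (fun a b hb hba ↦ ?_)
    (fun a b ha hb ↦ ?_) a b
  · have := Real.rpow_add_le_add_rpow hb (sub_nonneg.2 hba) hs.le hs1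
    rw [add_sub_cancel] at this
    have : 0 ≤ (a - b) ^ s := Real.rpow_nonneg (sub_nonneg.2 hba) s
    linarith
  · have hab : a ^ s ≤ (a + b) ^ s := Real.rpow_le_rpow ha (by linarith) hs.le
    have hba : b ^ s ≤ (a + b) ^ s := Real.rpow_le_rpow hb (by linarith) hs.le
    linarith

theorem abs_signedRpow_sub_le_of_one_le {s : ℝ} (hs : 1 ≤ s) (a b : ℝ) :
    |signedRpow s a - signedRpow s b| ≤ s * |a - b| * (|a| + |b|) ^ (s - 1) := by
  have hs0 : 0 < s := by linarith
  refine abs_signedRpow_sub_le hs0 (G := fun d m ↦ s * d * m ^ (s - 1))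
    (fun a b hb hba ↦ ?_) (fun a b ha hb ↦ ?_) a b
  · calc a ^ s - b ^ s ≤ s * a ^ (s - 1) * (a - b) := rpow_sub_rpow_le_of_one_le hs hb hba
      _ ≤ s * (a + b) ^ (s - 1) * (a - b) := by gcongr <;> linarith
      _ = s * (a - b) * (a + b) ^ (s - 1) := by ring
  · calc a ^ s + b ^ s ≤ (a + b) ^ s := Real.add_rpow_le_rpow_add ha hb hs
      _ = 1 * (a + b) * (a + b) ^ (s - 1) := by
        rw [one_mul, ← Real.rpow_one_add' (by positivity) (by linarith), add_sub_cancel]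
      _ ≤ s * (a + b) * (a + b) ^ (s - 1) := by gcongr

theorem sq_abs_signedRpow_sub_le_of_two_le {p ρ : ℝ} (hp : 2 ≤ p) (hρ : 0 < ρ) (a b : ℝ) :
    |signedRpow (p / 2) a - signedRpow (p / 2) b| ^ 2 ≤
      2 * (p / 2) ^ 2 / ρ ^ p * |a - b| ^ p
        + 2 ^ p * (p / 2) ^ 2 * ρ ^ 2 * (|a| ^ p + |b| ^ p) := by
  have hs : 1 ≤ p / 2 := by linarith
  have hd := abs_nonneg (a - b)
  have hm : 0 ≤ |a| + |b| := by positivity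
  have hincr : |signedRpow (p / 2) a - signedRpow (p / 2) b|
      ≤ p / 2 * (ρ * (|a| + |b|) ^ (p / 2) + (|a - b| / ρ) ^ (p / 2)) := by
    refine (abs_signedRpow_sub_le_of_one_le hs a b).trans ?_
    rw [mul_assoc]
    gcongr
    exact mul_rpow_sub_one_le hs hd (abs_sub a b) hρ
  calc |signedRpow (p / 2) a - signedRpow (p / 2) b| ^ 2
      ≤ (p / 2 * (ρ * (|a| + |b|) ^ (p / 2) + (|a - b| / ρ) ^ (p / 2))) ^ 2 := by gcongr
    _ ≤ (p / 2) ^ 2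
          * (2 * ((ρ * (|a| + |b|) ^ (p / 2)) ^ 2 + ((|a - b| / ρ) ^ (p / 2)) ^ 2)) := by
      rw [mul_pow]
      gcongr
      exact add_sq_le
    _ = 2 * (p / 2) ^ 2 / ρ ^ p * |a - b| ^ p
          + 2 * (p / 2) ^ 2 * ρ ^ 2 * (|a| + |b|) ^ p := by
      rw [mul_pow, sq_rpow_div_two hm, sq_rpow_div_two (by positivity),
        Real.div_rpow hd hρ.le]
      ring
    _ ≤ 2 * (p / 2) ^ 2 / ρ ^ p * |a - b| ^ p
          + 2 * (p / 2) ^ 2 * ρ ^ 2 * (2 ^ (p - 1) * (|a| ^ p + |b| ^ p)) := by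
      gcongr
      exact Real.rpow_add_le_mul_rpow_add_rpow (abs_nonneg a) (abs_nonneg b) (by linarith)
    _ = 2 * (p / 2) ^ 2 / ρ ^ p * |a - b| ^ p
          + 2 ^ p * (p / 2) ^ 2 * ρ ^ 2 * (|a| ^ p + |b| ^ p) := by
      have h2 : (2 : ℝ) ^ p = 2 * 2 ^ (p - 1) := by
        rw [← Real.rpow_one_add' zero_le_two (by linarith), add_sub_cancel]
      rw [h2]
      ring

theorem exists_sq_abs_signedRpow_sub_le {p η : ℝ} (hp : 0 < p) (hη : 0 < η) :
    ∃ C > 0, ∀ a b : ℝ, |signedRpow (p / 2) a - signedRpow (p / 2) b| ^ 2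
      ≤ C * |a - b| ^ p + η * (|a| ^ p + |b| ^ p) := by
  rcases le_total p 2 with hp2 | hp2
  · refine ⟨4, by norm_num, fun a b ↦ ?_⟩
    have := abs_signedRpow_sub_le_of_le_one (by linarith : 0 < p / 2) (by linarith) a b
    calc |signedRpow (p / 2) a - signedRpow (p / 2) b| ^ 2
          ≤ (2 * |a - b| ^ (p / 2)) ^ 2 := by gcongr
      _ = 4 * |a - b| ^ p := by rw [mul_pow, sq_rpow_div_two (abs_nonneg _)]; norm_num
      _ ≤ 4 * |a - b| ^ p + η * (|a| ^ p + |b| ^ p) := le_add_of_nonneg_right (by positivity)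
  · set ρ := √(η / (2 ^ p * (p / 2) ^ 2))
    have hρ : 0 < ρ := by positivity
    have hρη : 2 ^ p * (p / 2) ^ 2 * ρ ^ 2 = η := by
      rw [Real.sq_sqrt (by positivity)]
      field_simp
    refine ⟨2 * (p / 2) ^ 2 / ρ ^ p, by positivity, fun a b ↦ ?_⟩
    simpa only [hρη] using sq_abs_signedRpow_sub_le_of_two_le hp2 hρ a b

lemma lp.hasSum_sq_norm {ι : Type*} {E : ι → Type*} [∀ i, NormedAddCommGroup (E i)]
    (f : lp E 2) : HasSum (fun i ↦ ‖f i‖ ^ 2) (‖f‖ ^ 2) := by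
  simpa using lp.hasSum_norm (p := 2) (by norm_num) f

theorem lp.norm_sq_eq_of_forall_apply_eq {ι : Type*} {p : ℝ≥0∞} (hp : 0 < p.toReal)
    {g : ℝ → ℝ} (hg : ∀ a, |g a| ^ 2 = |a| ^ p.toReal) {x : lp (fun _ : ι ↦ ℝ) p}
    {fx : lp (fun _ : ι ↦ ℝ) 2} (hfx : ∀ i, fx i = g (x i)) : ‖fx‖ ^ 2 = ‖x‖ ^ p.toReal := by
  refine (lp.hasSum_sq_norm fx).unique ?_
  simpa only [hfx, Real.norm_eq_abs, hg] using lp.hasSum_norm hp x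

theorem lp.norm_sq_sub_le_of_forall_apply_eq {ι : Type*} {p : ℝ≥0∞} (hp : 0 < p.toReal)
    {g : ℝ → ℝ} {C η : ℝ}
    (hg : ∀ a b,
      |g a - g b| ^ 2 ≤ C * |a - b| ^ p.toReal + η * (|a| ^ p.toReal + |b| ^ p.toReal))
    {x y : lp (fun _ : ι ↦ ℝ) p} {fx fy : lp (fun _ : ι ↦ ℝ) 2}
    (hfx : ∀ i, fx i = g (x i)) (hfy : ∀ i, fy i = g (y i)) :
    ‖fx - fy‖ ^ 2 ≤ C * ‖x - y‖ ^ p.toReal + η * (‖x‖ ^ p.toReal + ‖y‖ ^ p.toReal) := by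
  refine hasSum_le (fun i ↦ ?_) (lp.hasSum_sq_norm (fx - fy))
    (((lp.hasSum_norm hp (x - y)).mul_left C).add
      (((lp.hasSum_norm hp x).add (lp.hasSum_norm hp y)).mul_left η))
  simpa only [lp.coeFn_sub, Pi.sub_apply, hfx, hfy, Real.norm_eq_abs] using hg (x i) (y i)

/-- For every `R > 0`, the extended Mazur map
`φ(a)_n = sgn(a_n)|a_n|^{p/2}` maps the closed ball of radius `R` of `ℓ^p(ℕ,ℝ)` into the
closed ball of radius `R^{p/2}` of `ℓ²(ℕ,ℝ)`, and its restriction to this ball is uniformly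
continuous. -/
theorem extended_mazur_map_uniformly_continuous_on_balls
    (p : ℝ≥0∞) (hp1 : 1 ≤ p) (hp : p ≠ ∞) (R : ℝ) (hR : 0 < R) :
    (∀ (x : lp (fun _ : ℕ => ℝ) p) (fx : lp (fun _ : ℕ => ℝ) 2), ‖x‖ ≤ R →
      (∀ n : ℕ, fx n = Real.sign (x n) * |x n| ^ (p.toReal / 2)) →
      ‖fx‖ ≤ R ^ (p.toReal / 2)) ∧
    (∀ ε : ℝ, 0 < ε → ∃ δ : ℝ, 0 < δ ∧
      ∀ (x y : lp (fun _ : ℕ => ℝ) p) (fx fy : lp (fun _ : ℕ => ℝ) 2),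
        ‖x‖ ≤ R → ‖y‖ ≤ R → ‖x - y‖ ≤ δ →
        (∀ n : ℕ, fx n = Real.sign (x n) * |x n| ^ (p.toReal / 2)) →
        (∀ n : ℕ, fy n = Real.sign (y n) * |y n| ^ (p.toReal / 2)) →
        ‖fx - fy‖ ≤ ε) := by
  have hp0 : 0 < p.toReal := ENNReal.toReal_pos (zero_lt_one.trans_le hp1).ne' hp
  refine ⟨fun x fx hx hfx ↦ ?_, fun ε hε ↦ ?_⟩
  · have hnorm : ‖fx‖ ^ 2 = ‖x‖ ^ p.toReal :=
      lp.norm_sq_eq_of_forall_apply_eq hp0 (g := signedRpow (p.toReal / 2)) (fun a ↦ by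
        rw [abs_signedRpow (by positivity), sq_rpow_div_two (abs_nonneg a)]) hfx
    rw [← pow_le_pow_iff_left₀ (norm_nonneg _) (by positivity) two_ne_zero, hnorm,
      sq_rpow_div_two hR.le]
    exact Real.rpow_le_rpow (lp.norm_nonneg' x) hx hp0.le
  · set η := ε ^ 2 / (4 * R ^ p.toReal)
    obtain ⟨C, hC, hφ⟩ := exists_sq_abs_signedRpow_sub_le hp0 (η := η) (by positivity)
    refine ⟨(ε ^ 2 / (2 * C)) ^ p.toReal⁻¹, by positivity,
      fun x y fx fy hx hy hxy hfx hfy ↦ ?_⟩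
    have hxy' : ‖x - y‖ ^ p.toReal ≤ ε ^ 2 / (2 * C) := by
      calc ‖x - y‖ ^ p.toReal ≤ ((ε ^ 2 / (2 * C)) ^ p.toReal⁻¹) ^ p.toReal :=
            Real.rpow_le_rpow (lp.norm_nonneg' _) hxy hp0.le
        _ = ε ^ 2 / (2 * C) := Real.rpow_inv_rpow (by positivity) hp0.ne'
    rw [← pow_le_pow_iff_left₀ (norm_nonneg _) hε.le two_ne_zero]
    calc ‖fx - fy‖ ^ 2 ≤ C * ‖x - y‖ ^ p.toReal + η * (‖x‖ ^ p.toReal + ‖y‖ ^ p.toReal) :=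
          lp.norm_sq_sub_le_of_forall_apply_eq hp0 hφ hfx hfy
      _ ≤ C * (ε ^ 2 / (2 * C)) + η * (R ^ p.toReal + R ^ p.toReal) := by
          gcongr <;> exact lp.norm_nonneg' _
      _ = ε ^ 2 := by simp only [η]; field_simp; ring
end

section
/- Let X be a proper metric space with bounded geometry such that for every R > 0, every R-chain-connected subset of X is bounded (i.e., X has only finite coarse components). Then X is a coarse disjoint union of a sequence of finite metric spaces: there is a partition X = ⊔_{n∈ℕ} X_n with each X_n finite and d(X_i, X_j) → ∞ as i + j → ∞, i ≠ j. -/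
/-!
Fix a base point `x₀` and let `c x = chainLevel x₀ x` be the least `n` such that `x` is reached
from `x₀` by a chain with steps of length at most `n`. The level set `c = n` lies in the
`(n + 1)`-chain component of `x₀` (the `+ 1` keeps the step length positive), which is bounded
by assumption and hence finite by bounded geometry. If `dist x y ≤ R`, a chain to `x` extends by
one step to `y`, so `c y ≤ max (c x) ⌈R⌉` and symmetrically; hence two points at distance `≤ R`
on different levels both have level `≤ ⌈R⌉`.
-/

/-- A subset `C` is `R`-chain-connected if any two of its points are joined by a finite
chain inside `C` with steps of length at most `R`. -/
def IsChainConnected {X : Type*} [MetricSpace X] (R : ℝ) (C : Set X) : Prop :=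
  ∀ x ∈ C, ∀ y ∈ C, ∃ (k : ℕ) (z : Fin (k + 1) → X),
    (∀ i, z i ∈ C) ∧ z 0 = x ∧ z (Fin.last k) = y ∧
    ∀ i : Fin k, dist (z i.castSucc) (z i.succ) ≤ R

open Relation

theorem Relation.ReflTransGen.exists_fin_chain {α : Type*} {r : α → α → Prop} {C : Set α}
    (hC : ∀ a b, a ∈ C → r a b → b ∈ C) {x y : α} (hx : x ∈ C) (h : ReflTransGen r x y) :
    ∃ (k : ℕ) (z : Fin (k + 1) → α), (∀ i, z i ∈ C) ∧ z 0 = x ∧ z (Fin.last k) = y ∧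
      ∀ i : Fin k, r (z i.castSucc) (z i.succ) := by
  induction h with
  | refl => exact ⟨0, fun _ => x, fun _ => hx, rfl, rfl, fun i => i.elim0⟩
  | @tail b c _ hbc ih =>
    obtain ⟨k, z, hmem, hz0, hzl, hstep⟩ := ih
    refine ⟨k + 1, Fin.snoc z c, fun i => ?_, ?_, by simp, fun i => ?_⟩
    · refine Fin.lastCases ?_ (fun j => ?_) i
      · simpa using hC b c (hzl ▸ hmem (Fin.last k)) hbc
      · simpa using hmem j
    · rw [← Fin.castSucc_zero, Fin.snoc_castSucc, hz0]
    · refine Fin.lastCases ?_ (fun j => ?_) i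
      · simpa [Fin.succ_last, hzl] using hbc
      · simpa only [Fin.succ_castSucc, Fin.snoc_castSucc] using hstep j

section ChainLevel

variable {X : Type*} [MetricSpace X]

def chainComponent (R : ℝ) (x₀ : X) : Set X :=
  {x | ReflTransGen (fun a b => dist a b ≤ R) x₀ x}

theorem chainComponent_mono {R S : ℝ} (hRS : R ≤ S) (x₀ : X) :
    chainComponent R x₀ ⊆ chainComponent S x₀ :=
  fun _ hx => ReflTransGen.mono (fun _ _ h => h.trans hRS) _ _ hx

theorem isChainConnected_chainComponent (R : ℝ) (x₀ : X) :
    IsChainConnected R (chainComponent R x₀) := by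
  have : Std.Symm (fun a b : X => dist a b ≤ R) := ⟨fun a b h => by rwa [dist_comm]⟩
  intro x hx y hy
  exact (Std.Symm.symm _ _ hx |>.trans hy).exists_fin_chain (fun _ _ ha hab => ha.tail hab) hx

theorem exists_mem_chainComponent (x₀ x : X) : ∃ n : ℕ, x ∈ chainComponent n x₀ :=
  ⟨⌈dist x₀ x⌉₊, .single (Nat.le_ceil _)⟩

noncomputable def chainLevel (x₀ x : X) : ℕ :=
  sInf {n : ℕ | x ∈ chainComponent n x₀}

theorem mem_chainComponent_chainLevel (x₀ x : X) : x ∈ chainComponent (chainLevel x₀ x) x₀ :=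
  Nat.sInf_mem (exists_mem_chainComponent x₀ x)

theorem chainLevel_le {x₀ x : X} {n : ℕ} (h : x ∈ chainComponent n x₀) : chainLevel x₀ x ≤ n :=
  Nat.sInf_le h

theorem chainLevel_le_max_of_dist_le {x₀ x y : X} {R : ℝ} (hxy : dist x y ≤ R) :
    chainLevel x₀ y ≤ max (chainLevel x₀ x) ⌈R⌉₊ := by
  apply chainLevel_le
  refine ReflTransGen.tail (chainComponent_mono ?_ x₀ (mem_chainComponent_chainLevel x₀ x)) ?_
  · exact_mod_cast le_max_left _ _
  · calc dist x y ≤ R := hxy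
      _ ≤ ⌈R⌉₊ := Nat.le_ceil R
      _ ≤ _ := by exact_mod_cast le_max_right _ _

theorem chainLevel_add_chainLevel_lt {x₀ x y : X} {R : ℝ} (hxy : dist x y ≤ R)
    (hne : chainLevel x₀ x ≠ chainLevel x₀ y) :
    chainLevel x₀ x + chainLevel x₀ y < 2 * ⌈R⌉₊ := by
  have hy := chainLevel_le_max_of_dist_le (x₀ := x₀) hxy
  have hx := chainLevel_le_max_of_dist_le (x₀ := x₀) (R := R) (by rwa [dist_comm])
  omega

theorem finite_setOf_chainLevel_eq {x₀ : X} (hball : ∀ r : ℝ, (Metric.closedBall x₀ r).Finite)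
    (hbdd : ∀ R : ℝ, 0 < R → Bornology.IsBounded (chainComponent R x₀)) (n : ℕ) :
    {x | chainLevel x₀ x = n}.Finite := by
  obtain ⟨r, hr⟩ := (hbdd (n + 1) n.cast_add_one_pos).subset_closedBall x₀
  refine (hball r).subset fun x hx => hr (chainComponent_mono (by linarith) x₀ ?_)
  exact hx ▸ mem_chainComponent_chainLevel x₀ x

end ChainLevel

theorem finite_coarse_components_coarse_disjoint_union_general
    {X : Type*} [MetricSpace X]
    (hbg : ∀ r : ℝ, 0 < r → ∃ N : ℕ, ∀ x : X,
      (Metric.closedBall x r).Finite ∧ Nat.card ↥(Metric.closedBall x r) ≤ N)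
    (hfcc : ∀ R : ℝ, 0 < R → ∀ C : Set X, IsChainConnected R C → Bornology.IsBounded C) :
    ∃ c : X → ℕ, (∀ n : ℕ, {x : X | c x = n}.Finite) ∧
      ∀ R : ℝ, ∃ N : ℕ, ∀ x y : X, c x ≠ c y → N ≤ c x + c y → R < dist x y := by
  rcases isEmpty_or_nonempty X with _ | ⟨⟨x₀⟩⟩
  · exact ⟨fun _ => 0, fun _ => Set.toFinite _, fun _ => ⟨0, fun x => isEmptyElim x⟩⟩
  have hball : ∀ r : ℝ, (Metric.closedBall x₀ r).Finite := fun r =>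
    (((hbg (max r 1) (by positivity)).choose_spec x₀).1).subset
      (Metric.closedBall_subset_closedBall (le_max_left r 1))
  refine ⟨chainLevel x₀, finite_setOf_chainLevel_eq hball
    (fun R hR => hfcc R hR _ (isChainConnected_chainComponent R x₀)), fun R => ⟨2 * ⌈R⌉₊, ?_⟩⟩
  intro x y hne hN
  by_contra! hxy
  exact (chainLevel_add_chainLevel_lt hxy hne).not_ge hN

/-- A proper metric space with (discrete) bounded geometry in which every
`R`-chain-connected subset is bounded is a coarse disjoint union of a sequence of finite
metric spaces: there is a partition into finite pieces whose mutual distances tend to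
infinity. -/
theorem finite_coarse_components_coarse_disjoint_union
    {X : Type*} [MetricSpace X] [ProperSpace X]
    (hbg : ∀ r : ℝ, 0 < r → ∃ N : ℕ, ∀ x : X,
      (Metric.closedBall x r).Finite ∧ Nat.card ↥(Metric.closedBall x r) ≤ N)
    (hfcc : ∀ R : ℝ, 0 < R → ∀ C : Set X, IsChainConnected R C → Bornology.IsBounded C) :
    ∃ c : X → ℕ, (∀ n : ℕ, {x : X | c x = n}.Finite) ∧
      ∀ R : ℝ, ∃ N : ℕ, ∀ x y : X, c x ≠ c y → N ≤ c x + c y → R < dist x y :=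
  finite_coarse_components_coarse_disjoint_union_general hbg hfcc
end
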